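/- arXiv:2210.05910 — 3 statements merged into one kernel-verified Lean document; each statement's English description precedes it below -/
import Mathlib

section
/- Let A and A* be m-by-m upper Hessenberg matrices with all subdiagonal entries of A nonzero, and let L be a unit lower bidiagonal matrix with L·A* = A·L. If the (2,1) entry of L is zero, then L is the identity matrix and the subdiagonal entries of A* equal those of A. -/
open Matrix

private lemma sum2 {m : ℕ} (f : Fin m → ℝ) (a b : Fin m) (hab : a ≠ b)
    (h : ∀ c, c ≠ a → c ≠ b → f c = 0) : ∑ k, f k = f a + f b :=
  Finset.sum_eq_add a b hab (fun c _ hc => h c hc.1 hc.2)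
    (fun h' => absurd (Finset.mem_univ a) h') (fun h' => absurd (Finset.mem_univ b) h')

/-- If the (2,1) entry of the unit lower bidiagonal matrix `L` with `L·A* = A·L` is zero,
then `L` is the identity and the subdiagonal entries of `A*` equal those of `A`. -/
theorem stmt1 {m : ℕ} (hm : 1 < m)
    (A Astar L : Matrix (Fin m) (Fin m) ℝ)
    (hA : ∀ i j : Fin m, (j : ℕ) + 1 < (i : ℕ) → A i j = 0)
    (hAstar : ∀ i j : Fin m, (j : ℕ) + 1 < (i : ℕ) → Astar i j = 0)
    (hsub : ∀ i j : Fin m, (i : ℕ) = (j : ℕ) + 1 → A i j ≠ 0)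
    (hLdiag : ∀ i : Fin m, L i i = 1)
    (hLoff : ∀ i j : Fin m, (i : ℕ) ≠ (j : ℕ) → (i : ℕ) ≠ (j : ℕ) + 1 → L i j = 0)
    (hEq : L * Astar = A * L)
    (h21 : L ⟨1, hm⟩ ⟨0, by omega⟩ = 0) :
    L = 1 ∧ ∀ i j : Fin m, (i : ℕ) = (j : ℕ) + 1 → Astar i j = A i j := by
  -- relation 1
  have rel1 : ∀ n : ℕ, ∀ h : n + 1 < m,
      L ⟨n+1, h⟩ ⟨n, by omega⟩ * Astar ⟨n, by omega⟩ ⟨n, by omega⟩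
        + Astar ⟨n+1, h⟩ ⟨n, by omega⟩
      = A ⟨n+1, h⟩ ⟨n, by omega⟩
        + A ⟨n+1, h⟩ ⟨n+1, h⟩ * L ⟨n+1, h⟩ ⟨n, by omega⟩ := by
    intro n h
    have key := congrFun (congrFun hEq ⟨n+1, h⟩) ⟨n, by omega⟩
    rw [mul_apply, mul_apply] at key
    rw [sum2 _ (⟨n, by omega⟩ : Fin m) ⟨n+1, h⟩ (by simp [Fin.ext_iff])
        (fun c hc1 hc2 => by
          rw [hLoff ⟨n+1, h⟩ c (by simpa [Fin.ext_iff, eq_comm] using hc2)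
            (by simpa [Fin.ext_iff, eq_comm] using hc1), zero_mul]),
      sum2 _ (⟨n, by omega⟩ : Fin m) ⟨n+1, h⟩ (by simp [Fin.ext_iff])
        (fun c hc1 hc2 => by
          rw [hLoff c ⟨n, by omega⟩ (by simpa [Fin.ext_iff] using hc1)
            (by simpa [Fin.ext_iff] using hc2), mul_zero])] at key
    rw [hLdiag, hLdiag] at key
    linarith [key]
  -- relation 2
  have rel2 : ∀ n : ℕ, ∀ h : n + 2 < m,
      L ⟨n+2, h⟩ ⟨n+1, by omega⟩ * Astar ⟨n+1, by omega⟩ ⟨n, by omega⟩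
      = A ⟨n+2, h⟩ ⟨n+1, by omega⟩ * L ⟨n+1, by omega⟩ ⟨n, by omega⟩ := by
    intro n h
    have key := congrFun (congrFun hEq ⟨n+2, h⟩) ⟨n, by omega⟩
    rw [mul_apply, mul_apply] at key
    rw [sum2 _ (⟨n+1, by omega⟩ : Fin m) ⟨n+2, h⟩ (by simp [Fin.ext_iff])
        (fun c hc1 hc2 => by
          rw [hLoff ⟨n+2, h⟩ c (by simpa [Fin.ext_iff, eq_comm] using hc2)
            (by simpa [Fin.ext_iff, eq_comm] using hc1), zero_mul]),
      sum2 _ (⟨n, by omega⟩ : Fin m) ⟨n+1, by omega⟩ (by simp [Fin.ext_iff])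
        (fun c hc1 hc2 => by
          rw [hLoff c ⟨n, by omega⟩ (by simpa [Fin.ext_iff] using hc1)
            (by simpa [Fin.ext_iff] using hc2), mul_zero])] at key
    rw [hLdiag, hAstar ⟨n+2, h⟩ ⟨n, by omega⟩ (by simp),
      hA ⟨n+2, h⟩ ⟨n, by omega⟩ (by simp), hLdiag] at key
    linarith [key]
  -- all subdiagonal entries of L vanish
  have Lzero : ∀ n : ℕ, ∀ h : n + 1 < m, L ⟨n+1, h⟩ ⟨n, by omega⟩ = 0 := by
    intro n
    induction n with
    | zero => intro h; exact h21
    | succ k ih =>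
      intro h
      have hk : k + 1 < m := by omega
      have hLk := ih hk
      -- Astar_{k+1,k} = A_{k+1,k} ≠ 0
      have hAs : Astar ⟨k+1, hk⟩ ⟨k, by omega⟩ = A ⟨k+1, hk⟩ ⟨k, by omega⟩ := by
        have := rel1 k hk
        rw [hLk] at this
        linarith [this]
      have hne : Astar ⟨k+1, hk⟩ ⟨k, by omega⟩ ≠ 0 := by
        rw [hAs]; exact hsub _ _ (by simp)
      have := rel2 k h
      rw [hLk, mul_zero] at this
      exact (mul_eq_zero.mp this).resolve_right hne
  have hAsub : ∀ i j : Fin m, (i : ℕ) = (j : ℕ) + 1 → Astar i j = A i j := by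
    intro i j hij
    have hj : (j : ℕ) + 1 < m := by omega
    have hi : i = ⟨(j : ℕ) + 1, hj⟩ := by simp [Fin.ext_iff, hij]
    have hj' : (⟨(j : ℕ), by omega⟩ : Fin m) = j := by simp
    subst hi
    have := rel1 j hj
    rw [Lzero j hj, hj'] at this
    linarith [this]
  refine ⟨?_, hAsub⟩
  ext i j
  rcases eq_or_ne i j with rfl | hij
  · simp [hLdiag]
  · rw [Matrix.one_apply_ne hij]
    rcases eq_or_ne (i : ℕ) ((j : ℕ) + 1) with heq | hne
    · have hj : (j : ℕ) + 1 < m := by omega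
      have hi : i = ⟨(j : ℕ) + 1, hj⟩ := by simp [Fin.ext_iff, heq]
      have hj' : (⟨(j : ℕ), by omega⟩ : Fin m) = j := by simp
      rw [hi]
      have := Lzero j hj
      rw [hj'] at this
      exact this
    · exact hLoff i j (fun h => hij (Fin.ext h)) hne
end

section
/- Let L be an m-by-m unit lower bidiagonal matrix with subdiagonal entries e_1,...,e_{m-1} all positive, and let U be an m-by-m upper bidiagonal matrix with diagonal entries q_1,...,q_m all positive and superdiagonal entries f_1,...,f_{m-1} all nonnegative. Then there exist a unit lower bidiagonal matrix L̄ with positive subdiagonal entries ē_1,...,ē_{m-1} and an upper bidiagonal matrix Ū with positive diagonal entries q̄_1,...,q̄_m and superdiagonal entries f̄_i = f_i such that L̄·Ū = U·L. -/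
open Matrix

noncomputable def eP {m : ℕ} (L : Matrix (Fin m) (Fin m) ℝ) (i : ℕ) : ℝ :=
  if h : i + 1 < m then L ⟨i+1, h⟩ ⟨i, Nat.lt_of_succ_lt h⟩ else 0

noncomputable def fP {m : ℕ} (U : Matrix (Fin m) (Fin m) ℝ) (i : ℕ) : ℝ :=
  if h : i + 1 < m then U ⟨i, Nat.lt_of_succ_lt h⟩ ⟨i+1, h⟩ else 0

noncomputable def qP {m : ℕ} (U : Matrix (Fin m) (Fin m) ℝ) (i : ℕ) : ℝ :=
  if h : i < m then U ⟨i, h⟩ ⟨i, h⟩ else 1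

noncomputable def dP {m : ℕ} (L U : Matrix (Fin m) (Fin m) ℝ) : ℕ → ℝ
  | 0 => qP U 0
  | (i+1) => qP U (i+1) * dP L U i / (dP L U i + eP L i * fP U i)

noncomputable def qbar {m : ℕ} (L U : Matrix (Fin m) (Fin m) ℝ) (i : ℕ) : ℝ :=
  dP L U i + eP L i * fP U i

noncomputable def ebar {m : ℕ} (L U : Matrix (Fin m) (Fin m) ℝ) (i : ℕ) : ℝ :=
  qP U (i+1) * eP L i / qbar L U i

/-- Bidiagonal exchange lemma: the product `U·L` of a positive upper bidiagonal matrix and a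
positive unit lower bidiagonal matrix admits an LU decomposition `L̄·Ū` of the same shape,
with the superdiagonal of `Ū` equal to that of `U`. -/
theorem stmt3 {m : ℕ} (L U : Matrix (Fin m) (Fin m) ℝ)
    (hLdiag : ∀ i : Fin m, L i i = 1)
    (hLoff : ∀ i j : Fin m, (i : ℕ) ≠ (j : ℕ) → (i : ℕ) ≠ (j : ℕ) + 1 → L i j = 0)
    (hLpos : ∀ i j : Fin m, (i : ℕ) = (j : ℕ) + 1 → 0 < L i j)
    (hUoff : ∀ i j : Fin m, (i : ℕ) ≠ (j : ℕ) → (j : ℕ) ≠ (i : ℕ) + 1 → U i j = 0)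
    (hUdiag : ∀ i : Fin m, 0 < U i i)
    (hUf : ∀ i j : Fin m, (j : ℕ) = (i : ℕ) + 1 → 0 ≤ U i j) :
    ∃ Lbar Ubar : Matrix (Fin m) (Fin m) ℝ,
      (∀ i : Fin m, Lbar i i = 1) ∧
      (∀ i j : Fin m, (i : ℕ) ≠ (j : ℕ) → (i : ℕ) ≠ (j : ℕ) + 1 → Lbar i j = 0) ∧
      (∀ i j : Fin m, (i : ℕ) = (j : ℕ) + 1 → 0 < Lbar i j) ∧
      (∀ i j : Fin m, (i : ℕ) ≠ (j : ℕ) → (j : ℕ) ≠ (i : ℕ) + 1 → Ubar i j = 0) ∧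
      (∀ i : Fin m, 0 < Ubar i i) ∧
      (∀ i j : Fin m, (j : ℕ) = (i : ℕ) + 1 → Ubar i j = U i j) ∧
      Lbar * Ubar = U * L := by
  -- basic positivity facts
  have hePpos : ∀ i : ℕ, i + 1 < m → 0 < eP L i := by
    intro i h
    simp only [eP, dif_pos h]
    exact hLpos _ _ rfl
  have hePnn : ∀ i : ℕ, 0 ≤ eP L i := by
    intro i
    by_cases h : i + 1 < m
    · exact (hePpos i h).le
    · simp [eP, h]
  have hfPnn : ∀ i : ℕ, 0 ≤ fP U i := by
    intro i
    by_cases h : i + 1 < m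
    · simp only [fP, dif_pos h]
      exact hUf _ _ rfl
    · simp [fP, h]
  have hqPpos : ∀ i : ℕ, 0 < qP U i := by
    intro i
    by_cases h : i < m
    · simp only [qP, dif_pos h]; exact hUdiag _
    · simp [qP, h]
  have hdpos : ∀ i : ℕ, 0 < dP L U i := by
    intro i
    induction i with
    | zero => simpa [dP] using hqPpos 0
    | succ n ih =>
      have hden : 0 < dP L U n + eP L n * fP U n :=
        lt_of_lt_of_le ih (le_add_of_nonneg_right (mul_nonneg (hePnn n) (hfPnn n)))
      exact div_pos (mul_pos (hqPpos (n+1)) ih) hden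
  have hqbpos : ∀ i : ℕ, 0 < qbar L U i := fun i =>
    lt_of_lt_of_le (hdpos i) (le_add_of_nonneg_right (mul_nonneg (hePnn i) (hfPnn i)))
  have hqbne : ∀ i : ℕ, qbar L U i ≠ 0 := fun i => (hqbpos i).ne'
  have hebpos : ∀ i : ℕ, i + 1 < m → 0 < ebar L U i := fun i h =>
    div_pos (mul_pos (hqPpos (i+1)) (hePpos i h)) (hqbpos i)
  -- the matrices
  refine ⟨Matrix.of fun i j =>
      if (i : ℕ) = (j : ℕ) then 1 else if (i : ℕ) = (j : ℕ) + 1 then ebar L U (j : ℕ) else 0,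
    Matrix.of fun i j =>
      if (i : ℕ) = (j : ℕ) then qbar L U (i : ℕ)
      else if (j : ℕ) = (i : ℕ) + 1 then U i j else 0, ?_, ?_, ?_, ?_, ?_, ?_, ?_⟩
  · intro i; simp
  · intro i j h1 h2; simp [h1, h2]
  · intro i j h
    have h1 : (i : ℕ) ≠ (j : ℕ) := by omega
    have hj : (j : ℕ) + 1 < m := h ▸ i.isLt
    simp only [Matrix.of_apply, if_neg h1, if_pos h]
    exact hebpos _ hj
  · intro i j h1 h2; simp [h1, h2]
  · intro i; simpa using hqbpos (i : ℕ)
  · intro i j h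
    have h1 : (j : ℕ) ≠ (i : ℕ) := by omega
    simp [h1.symm, h]
  · -- the product identity
    set Lb : Matrix (Fin m) (Fin m) ℝ := Matrix.of fun i j =>
      if (i : ℕ) = (j : ℕ) then 1 else if (i : ℕ) = (j : ℕ) + 1 then ebar L U (j : ℕ) else 0
    set Ub : Matrix (Fin m) (Fin m) ℝ := Matrix.of fun i j =>
      if (i : ℕ) = (j : ℕ) then qbar L U (i : ℕ)
      else if (j : ℕ) = (i : ℕ) + 1 then U i j else 0
    have hLbapp : ∀ a b : Fin m, Lb a b = if (a : ℕ) = (b : ℕ) then 1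
        else if (a : ℕ) = (b : ℕ) + 1 then ebar L U (b : ℕ) else 0 := fun a b => rfl
    have hUbapp : ∀ a b : Fin m, Ub a b = if (a : ℕ) = (b : ℕ) then qbar L U (a : ℕ)
        else if (b : ℕ) = (a : ℕ) + 1 then U a b else 0 := fun a b => rfl
    ext i j
    rw [Matrix.mul_apply, Matrix.mul_apply]
    -- RHS: U * L
    have hRHS : ∑ k, U i k * L k j
        = U i i * L i j + (if h : (i : ℕ) + 1 < m then fP U (i:ℕ) * L ⟨(i:ℕ)+1, h⟩ j else 0) := by
      by_cases hi : (i : ℕ) + 1 < m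
      · have hne : i ≠ (⟨(i:ℕ)+1, hi⟩ : Fin m) := by
          intro h; have := congrArg Fin.val h; simp at this
        have hsub : ∑ k ∈ ({i, ⟨(i:ℕ)+1, hi⟩} : Finset (Fin m)), U i k * L k j
            = ∑ k, U i k * L k j := by
          refine Finset.sum_subset (Finset.subset_univ _) ?_
          intro k _ hk
          simp only [Finset.mem_insert, Finset.mem_singleton, not_or] at hk
          have h1 : (i : ℕ) ≠ (k : ℕ) := fun h => hk.1 (Fin.ext h.symm)
          have h2 : (k : ℕ) ≠ (i : ℕ) + 1 := fun h => hk.2 (Fin.ext h)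
          rw [hUoff i k h1 h2, zero_mul]
        rw [← hsub, Finset.sum_pair hne, dif_pos hi]
        have h3 : U i ⟨(i:ℕ)+1, hi⟩ = fP U (i : ℕ) := by
          simp only [fP, dif_pos hi, Fin.eta]
        rw [h3]
      · rw [dif_neg hi, add_zero]
        refine Finset.sum_eq_single i (fun k _ hk => ?_) (by simp)
        have h1 : (i : ℕ) ≠ (k : ℕ) := fun h => hk (Fin.ext h.symm)
        have h2 : (k : ℕ) ≠ (i : ℕ) + 1 := by omega
        rw [hUoff i k h1 h2, zero_mul]
    -- LHS: Lb * Ub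
    have hLHS : ∀ n : ℕ, ∀ hn : n + 1 ≤ m → (n : ℕ) < m, True := fun _ _ => trivial
    clear hLHS
    have hLHS : ∑ k, Lb i k * Ub k j
        = Ub i j + (if h : 0 < (i : ℕ) then
            ebar L U ((i:ℕ)-1) * Ub ⟨(i:ℕ)-1, by omega⟩ j else 0) := by
      by_cases hi : 0 < (i : ℕ)
      · have hlt : (i : ℕ) - 1 < m := by omega
        have hne : i ≠ (⟨(i:ℕ)-1, hlt⟩ : Fin m) := by
          intro h
          have : (i:ℕ) = (i:ℕ) - 1 := congrArg Fin.val h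
          omega
        have hsub : ∑ k ∈ ({i, ⟨(i:ℕ)-1, hlt⟩} : Finset (Fin m)), Lb i k * Ub k j
            = ∑ k, Lb i k * Ub k j := by
          refine Finset.sum_subset (Finset.subset_univ _) ?_
          intro k _ hk
          simp only [Finset.mem_insert, Finset.mem_singleton, not_or] at hk
          have h1 : (i : ℕ) ≠ (k : ℕ) := fun h => hk.1 (Fin.ext h.symm)
          have h2 : (i : ℕ) ≠ (k : ℕ) + 1 := by
            intro h
            exact hk.2 (Fin.ext (show (k:ℕ) = (i:ℕ) - 1 by omega))
          rw [hLbapp, if_neg h1, if_neg h2, zero_mul]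
        rw [← hsub, Finset.sum_pair hne, dif_pos hi]
        have e1 : Lb i i = 1 := by rw [hLbapp, if_pos rfl]
        have e2 : Lb i ⟨(i:ℕ)-1, hlt⟩ = ebar L U ((i:ℕ)-1) := by
          rw [hLbapp]
          rw [if_neg (show ¬((i:ℕ) = (i:ℕ)-1) by omega),
            if_pos (show (i:ℕ) = ((i:ℕ)-1) + 1 by omega)]
        rw [e1, e2, one_mul]
      · rw [dif_neg hi, add_zero]
        have hone : Lb i i = 1 := by rw [hLbapp, if_pos rfl]
        calc ∑ k, Lb i k * Ub k j = Lb i i * Ub i j := by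
              refine Finset.sum_eq_single i (fun k _ hk => ?_) ?_
              · have h1 : (i : ℕ) ≠ (k : ℕ) := fun h => hk (Fin.ext h.symm)
                have h2 : (i : ℕ) ≠ (k : ℕ) + 1 := by omega
                rw [hLbapp, if_neg h1, if_neg h2, zero_mul]
              · exact fun h => absurd (Finset.mem_univ i) h
          _ = Ub i j := by rw [hone, one_mul]
    rw [hLHS, hRHS]
    -- now case analysis on the position (i, j)
    rcases Nat.lt_trichotomy (i : ℕ) (j : ℕ) with hij | hij | hij
    · -- i < j
      by_cases hs : (j : ℕ) = (i : ℕ) + 1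
      · -- superdiagonal
        have hUbij : Ub i j = U i j := by
          rw [hUbapp, if_neg (by omega), if_pos hs]
        have hLij : L i j = 0 := hLoff i j (by omega) (by omega)
        have hfi : (i : ℕ) + 1 < m := hs ▸ j.isLt
        rw [hUbij, hLij, mul_zero, zero_add, dif_pos hfi]
        have hLj : L ⟨(i:ℕ)+1, hfi⟩ j = 1 := by
          have he : (⟨(i:ℕ)+1, hfi⟩ : Fin m) = j := Fin.ext (by simp [hs])
          rw [he]; exact hLdiag j
        rw [hLj, mul_one]
        have hfPi : fP U (i:ℕ) = U i j := by
          simp only [fP, dif_pos hfi, Fin.eta]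
          exact congrArg (U i) (Fin.ext (show (i:ℕ)+1 = (j:ℕ) from hs.symm))
        by_cases hi : 0 < (i : ℕ)
        · rw [dif_pos hi]
          have hUb0 : Ub ⟨(i:ℕ)-1, by omega⟩ j = 0 := by
            rw [hUbapp, if_neg (show ¬((i:ℕ)-1 = (j:ℕ)) by omega),
              if_neg (show ¬((j:ℕ) = ((i:ℕ)-1) + 1) by omega)]
          rw [hUb0, mul_zero, add_zero, hfPi]
        · rw [dif_neg hi, add_zero, hfPi]
      · -- far above diagonal: everything is 0
        have hUbij : Ub i j = 0 := by
          rw [hUbapp, if_neg (by omega), if_neg hs]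
        have hLij : L i j = 0 := hLoff i j (by omega) (by omega)
        rw [hUbij, hLij, mul_zero, zero_add, zero_add]
        have hright : (if h : (i : ℕ) + 1 < m then fP U (i:ℕ) * L ⟨(i:ℕ)+1, h⟩ j else 0) = 0 := by
          split
          · rw [hLoff _ j (by simp; omega) (by simp; omega), mul_zero]
          · rfl
        rw [hright]
        split
        · have hUb0 : Ub ⟨(i:ℕ)-1, by omega⟩ j = 0 := by
            rw [hUbapp, if_neg (show ¬((i:ℕ)-1 = (j:ℕ)) by omega),
              if_neg (show ¬((j:ℕ) = ((i:ℕ)-1) + 1) by omega)]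
          rw [hUb0, mul_zero]
        · rfl
    · -- diagonal
      have hj : i = j := Fin.ext hij
      subst hj
      have hUbii : Ub i i = qbar L U (i : ℕ) := by rw [hUbapp, if_pos rfl]
      rw [hUbii, hLdiag i, mul_one]
      have hright : (if h : (i : ℕ) + 1 < m then fP U (i:ℕ) * L ⟨(i:ℕ)+1, h⟩ i else 0)
          = eP L (i : ℕ) * fP U (i : ℕ) := by
        by_cases h : (i : ℕ) + 1 < m
        · rw [dif_pos h]
          have hl : L ⟨(i:ℕ)+1, h⟩ i = eP L (i : ℕ) := by
            simp only [eP, dif_pos h, Fin.eta]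
          rw [hl]; ring
        · rw [dif_neg h]
          simp [eP, h]
      rw [hright]
      have hqii : U i i = qP U (i : ℕ) := by
        simp only [qP, dif_pos i.isLt, Fin.eta]
      rw [hqii]
      by_cases hi : 0 < (i : ℕ)
      · rw [dif_pos hi]
        obtain ⟨n, hni⟩ : ∃ n, (i : ℕ) = n + 1 := ⟨(i:ℕ)-1, by omega⟩
        have hnm : n + 1 < m := hni ▸ i.isLt
        have hUb' : Ub ⟨(i:ℕ)-1, by omega⟩ i = fP U n := by
          rw [hUbapp, if_neg (show ¬((i:ℕ)-1 = (i:ℕ)) by omega),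
            if_pos (show (i:ℕ) = ((i:ℕ)-1) + 1 by omega)]
          simp only [fP, dif_pos hnm]
          exact congrArg₂ U (Fin.ext (show (i:ℕ)-1 = n by omega))
            (Fin.ext (show (i:ℕ) = n + 1 from hni))
        rw [hUb', hni]
        have hsimp : (n + 1 - 1) = n := rfl
        rw [hsimp]
        simp only [qbar, ebar, dP]
        have hne0 : dP L U n + eP L n * fP U n ≠ 0 := hqbne n
        field_simp [qbar]
        ring
      · rw [dif_neg hi, add_zero]
        have hi0 : (i : ℕ) = 0 := by omega
        rw [hi0]
        simp only [qbar, dP]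
    · -- i > j
      by_cases hs : (i : ℕ) = (j : ℕ) + 1
      · -- subdiagonal
        have hUbij : Ub i j = 0 := by
          rw [hUbapp, if_neg (by omega), if_neg (by omega)]
        rw [hUbij, zero_add]
        have hi : 0 < (i : ℕ) := by omega
        rw [dif_pos hi]
        have hUb' : Ub ⟨(i:ℕ)-1, by omega⟩ j = qbar L U ((i:ℕ)-1) := by
          rw [hUbapp, if_pos (show (i:ℕ)-1 = (j:ℕ) by omega)]
        have hi1 : (i : ℕ) - 1 = (j : ℕ) := by omega
        rw [hUb', hi1]
        have hjm : (j : ℕ) + 1 < m := hs ▸ i.isLt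
        have hieq : i = (⟨(j:ℕ)+1, hjm⟩ : Fin m) := Fin.ext hs
        have hLij : L i j = eP L (j : ℕ) := by
          rw [hieq]
          simp only [eP, dif_pos hjm, Fin.eta]
        have hright : (if h : (i : ℕ) + 1 < m then fP U (i:ℕ) * L ⟨(i:ℕ)+1, h⟩ j else 0) = 0 := by
          split
          · rw [hLoff _ j (by simp; omega) (by simp; omega), mul_zero]
          · rfl
        rw [hright, add_zero, hLij]
        have hqii : U i i = qP U ((j : ℕ) + 1) := by
          rw [hieq]
          simp only [qP, dif_pos hjm]
        rw [hqii]
        rw [ebar, div_mul_cancel₀ _ (hqbne (j : ℕ))]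
      · -- far below diagonal: everything 0
        have hUbij : Ub i j = 0 := by
          rw [hUbapp, if_neg (by omega), if_neg (by omega)]
        have hLij : L i j = 0 := hLoff i j (by omega) hs
        rw [hUbij, hLij, mul_zero, zero_add, zero_add]
        have hright : (if h : (i : ℕ) + 1 < m then fP U (i:ℕ) * L ⟨(i:ℕ)+1, h⟩ j else 0) = 0 := by
          split
          · rw [hLoff _ j (by simp; omega) (by simp; omega), mul_zero]
          · rfl
        rw [hright]
        split
        · have hUb0 : Ub ⟨(i:ℕ)-1, by omega⟩ j = 0 := by
            rw [hUbapp, if_neg (show ¬((i:ℕ)-1 = (j:ℕ)) by omega),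
              if_neg (show ¬((j:ℕ) = ((i:ℕ)-1) + 1) by omega)]
          rw [hUb0, mul_zero]
        · rfl
end

section
/- In the LU decomposition U·L = L̄·Ū of Lemma (product of positive upper bidiagonal times positive unit lower bidiagonal), the auxiliary quantities d_i defined by d_1 = q_1 and d_i = (q_i / q̄_{i-1}) d_{i-1} are all positive, and they satisfy d_i = q_i − ē_{i-1} f_{i-1} for i = 2,...,m. -/
/-- In the LU decomposition of `U·L` (bidiagonal exchange lemma) the auxiliary quantities
`d_i`, given by `d_1 = q_1` and `d_i = (q_i / q̄_{i-1}) d_{i-1}`, are all positive and satisfy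
`d_i = q_i − ē_{i-1} f_{i-1}` for `i = 2,…,m`. -/
theorem stmt4 {m : ℕ} (q e f qbar ebar d : ℕ → ℝ)
    (hq : ∀ i, 1 ≤ i → i ≤ m → 0 < q i)
    (he : ∀ i, 1 ≤ i → i ≤ m - 1 → 0 < e i)
    (hf : ∀ i, 1 ≤ i → i ≤ m - 1 → 0 ≤ f i)
    (hd1 : d 1 = q 1)
    (hqbar : ∀ i, 1 ≤ i → i ≤ m → qbar i = d i + e i * f i)
    (hebar : ∀ i, 1 ≤ i → i ≤ m - 1 → ebar i = q (i + 1) * e i / qbar i)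
    (hdrec : ∀ i, 2 ≤ i → i ≤ m → d i = q i / qbar (i - 1) * d (i - 1)) :
    (∀ i, 1 ≤ i → i ≤ m → 0 < d i) ∧
    (∀ i, 2 ≤ i → i ≤ m → d i = q i - ebar (i - 1) * f (i - 1)) := by
  have hpos : ∀ i, 1 ≤ i → i ≤ m → 0 < d i := by
    intro i
    induction i with
    | zero => omega
    | succ n ih =>
      intro h1 h2
      rcases Nat.eq_zero_or_pos n with hn | hn
      · subst hn
        rw [hd1]; exact hq 1 le_rfl h2
      · have hdn : 0 < d n := ih hn (by omega)
        have hqbn : 0 < qbar n := by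
          rw [hqbar n hn (by omega)]
          have := mul_nonneg (he n hn (by omega)).le (hf n hn (by omega))
          linarith
        have := hdrec (n + 1) (by omega) h2
        simp only [Nat.add_sub_cancel] at this
        have hqn : 0 < q (n + 1) := hq (n + 1) h1 h2
        rw [this]
        positivity
  refine ⟨hpos, fun i h2 hm => ?_⟩
  obtain ⟨n, rfl⟩ : ∃ n, i = n + 1 := ⟨i - 1, by omega⟩
  have hn1 : 1 ≤ n := by omega
  have hnm : n ≤ m - 1 := by omega
  have hdn : 0 < d n := hpos n hn1 (by omega)
  have hqbn : 0 < qbar n := by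
    rw [hqbar n hn1 (by omega)]
    have := mul_nonneg (he n hn1 hnm).le (hf n hn1 hnm)
    linarith
  have hrec := hdrec (n + 1) (by omega) hm
  simp only [Nat.add_sub_cancel] at hrec ⊢
  rw [hrec, hebar n hn1 hnm, hqbar n hn1 (by omega)]
  rw [hqbar n hn1 (by omega)] at hqbn
  field_simp
  ring
end
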